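/- Any classifier f' achieving the maximum of the separated-region optimization problem (choosing pairwise 2r-separated sets S_1, ..., S_C maximizing Σ_j ∫_{S_j} p(y=j|x) dμ(x)) via its robust regions has astuteness at least that of any other classifier f; i.e., the r-Optimal classifier maximizes astuteness at radius r. -/

import Mathlib

open MeasureTheory Set
open scoped ENNReal

/-- The robustness radius of a classifier `f` at a point `x`. -/
noncomputable def robustnessRadius {E : Type*} [NormedAddCommGroup E] {C : ℕ}
    (f : E → Fin C) (x : E) : ℝ :=
  sInf {d : ℝ | ∃ x', f x' ≠ f x ∧ d = dist x x'}

/-- The robust region `S_j(f, r)` of label `j`. -/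
def robustRegion {E : Type*} [NormedAddCommGroup E] {C : ℕ}
    (f : E → Fin C) (r : ℝ) (j : Fin C) : Set E :=
  {x | f x = j ∧ r ≤ robustnessRadius f x}

/-- A tuple of measurable sets that is pairwise `2r`-separated. -/
def SepFeasible {E : Type*} [NormedAddCommGroup E] [MeasurableSpace E] {C : ℕ}
    (r : ℝ) (S : Fin C → Set E) : Prop :=
  (∀ j, MeasurableSet (S j)) ∧
    ∀ j j', j ≠ j' → ∀ u ∈ S j, ∀ v ∈ S j', 2 * r ≤ dist u v

/-
The robust regions of any classifier are pairwise `2r`-separated (if `u` and `v`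
carry different labels, the midpoint disagrees with one of them, so one of the two robustness
radii is at most `dist u v / 2`). The astuteness of `f` is `∑ j, ∫_{S_j(f, r)} p j`, hence it is
bounded by the supremum of the separated-region problem, which `fopt` attains.
-/

section Robustness

variable {E : Type*} [NormedAddCommGroup E] {C : ℕ}

theorem robustnessRadius_le_dist (f : E → Fin C) {x x' : E} (h : f x' ≠ f x) :
    robustnessRadius f x ≤ dist x x' :=
  csInf_le ⟨0, fun _ ⟨_, _, hd⟩ => hd ▸ dist_nonneg⟩ ⟨x', h, rfl⟩

theorem two_mul_le_dist_of_mem_robustRegion [NormedSpace ℝ E] (f : E → Fin C) (r : ℝ)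
    {j j' : Fin C} (hjj' : j ≠ j') {u v : E} (hu : u ∈ robustRegion f r j)
    (hv : v ∈ robustRegion f r j') : 2 * r ≤ dist u v := by
  obtain ⟨hfu, hru⟩ := hu
  obtain ⟨hfv, hrv⟩ := hv
  set m := midpoint ℝ u v
  have hm : f m ≠ f u ∨ f m ≠ f v := by
    by_contra! h
    exact hjj' (hfu ▸ hfv ▸ h.1.symm.trans h.2)
  rcases hm with hmu | hmv
  · calc 2 * r ≤ 2 * dist u m := by linarith [robustnessRadius_le_dist f hmu]
      _ = dist u v := by rw [dist_left_midpoint (𝕜 := ℝ), Real.norm_two]; ring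
  · calc 2 * r ≤ 2 * dist v m := by linarith [robustnessRadius_le_dist f hmv]
      _ = dist u v := by rw [dist_comm v, dist_midpoint_right (𝕜 := ℝ), Real.norm_two]; ring

theorem sepFeasible_robustRegion [NormedSpace ℝ E] [MeasurableSpace E] (f : E → Fin C) (r : ℝ)
    (hS : ∀ j, MeasurableSet (robustRegion f r j)) : SepFeasible r (robustRegion f r) :=
  ⟨hS, fun _ _ hjj' _ hu _ hv => two_mul_le_dist_of_mem_robustRegion f r hjj' hu hv⟩

theorem setOf_robust_correct_eq_iUnion (f : E → Fin C) (r : ℝ) :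
    {q : E × Fin C | r ≤ robustnessRadius f q.1 ∧ f q.1 = q.2} =
      ⋃ j, robustRegion f r j ×ˢ ({j} : Set (Fin C)) := by
  ext ⟨x, y⟩
  simp only [robustRegion, mem_ofPred_eq, mem_iUnion, mem_prod, mem_singleton_iff]
  exact ⟨fun ⟨hr, hf⟩ => ⟨y, ⟨hf, hr⟩, rfl⟩, fun ⟨_, ⟨hf, hr⟩, hj⟩ => ⟨hr, hj ▸ hf⟩⟩

end Robustness

theorem measure_robust_correct_eq_sum_lintegral {E : Type*} [NormedAddCommGroup E]
    [MeasurableSpace E] {C : ℕ} (μ : Measure (E × Fin C)) (r : ℝ)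
    (p : Fin C → E → ℝ≥0∞)
    (hp : ∀ (j : Fin C) (A : Set E), MeasurableSet A →
      μ (A ×ˢ ({j} : Set (Fin C))) = ∫⁻ x in A, p j x ∂(μ.map Prod.fst))
    (f : E → Fin C) (hS : ∀ j, MeasurableSet (robustRegion f r j)) :
    μ {q : E × Fin C | r ≤ robustnessRadius f q.1 ∧ f q.1 = q.2} =
      ∑ j, ∫⁻ x in robustRegion f r j, p j x ∂(μ.map Prod.fst) := by
  rw [setOf_robust_correct_eq_iUnion,
    measure_iUnion _ fun j => (hS j).prod (measurableSet_singleton j), tsum_fintype]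
  · exact Finset.sum_congr rfl fun j _ => hp j _ (hS j)
  · intro j j' hjj'
    exact disjoint_prod.2 (Or.inr (disjoint_singleton.2 hjj'))

theorem stmt2_general {E : Type*} [NormedAddCommGroup E] [NormedSpace ℝ E] [MeasurableSpace E]
    {C : ℕ} (μ : Measure (E × Fin C))
    (r : ℝ) (p : Fin C → E → ℝ≥0∞)
    (hp : ∀ (j : Fin C) (A : Set E), MeasurableSet A →
      μ (A ×ˢ ({j} : Set (Fin C))) = ∫⁻ x in A, p j x ∂(μ.map Prod.fst))
    (fopt : E → Fin C)
    (hSopt : ∀ j, MeasurableSet (robustRegion fopt r j))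
    (hach : ∑ j : Fin C, ∫⁻ x in robustRegion fopt r j, p j x ∂(μ.map Prod.fst) =
      ⨆ (S : Fin C → Set E) (_ : SepFeasible r S),
        ∑ j : Fin C, ∫⁻ x in S j, p j x ∂(μ.map Prod.fst))
    (f : E → Fin C) (hS : ∀ j, MeasurableSet (robustRegion f r j)) :
    μ {q : E × Fin C | r ≤ robustnessRadius f q.1 ∧ f q.1 = q.2} ≤
      μ {q : E × Fin C | r ≤ robustnessRadius fopt q.1 ∧ fopt q.1 = q.2} := by
  rw [measure_robust_correct_eq_sum_lintegral μ r p hp f hS,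
    measure_robust_correct_eq_sum_lintegral μ r p hp fopt hSopt, hach]
  exact le_iSup₂ (f := fun (S : Fin C → Set E) (_ : SepFeasible r S) =>
    ∑ j, ∫⁻ x in S j, p j x ∂(μ.map Prod.fst)) _ (sepFeasible_robustRegion f r hS)

/-- If the robust regions of a classifier `fopt` achieve the supremum of the
separated-region optimization problem, then `fopt` maximizes astuteness at radius `r`:
any classifier `f` has astuteness at most that of `fopt`. -/
theorem stmt2 {E : Type*} [NormedAddCommGroup E] [NormedSpace ℝ E] [MeasurableSpace E]
    {C : ℕ} (μ : Measure (E × Fin C)) [IsProbabilityMeasure μ]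
    (r : ℝ) (hr : 0 < r) (p : Fin C → E → ℝ≥0∞)
    (hp : ∀ (j : Fin C) (A : Set E), MeasurableSet A →
      μ (A ×ˢ ({j} : Set (Fin C))) = ∫⁻ x in A, p j x ∂(μ.map Prod.fst))
    (fopt : E → Fin C)
    (hSopt : ∀ j, MeasurableSet (robustRegion fopt r j))
    (hach : ∑ j : Fin C, ∫⁻ x in robustRegion fopt r j, p j x ∂(μ.map Prod.fst) =
      ⨆ (S : Fin C → Set E) (_ : SepFeasible r S),
        ∑ j : Fin C, ∫⁻ x in S j, p j x ∂(μ.map Prod.fst))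
    (f : E → Fin C) (hS : ∀ j, MeasurableSet (robustRegion f r j)) :
    μ {q : E × Fin C | r ≤ robustnessRadius f q.1 ∧ f q.1 = q.2} ≤
      μ {q : E × Fin C | r ≤ robustnessRadius fopt q.1 ∧ fopt q.1 = q.2} :=
  stmt2_general μ r p hp fopt hSopt hach f hS
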